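/- Let $H$ be a symmetric positive definite $d \times d$ matrix, $g \in \mathbb{R}^d$ with $g \ne 0$, and let $\sigma > 0$, $\beta \ge 0$. Consider the function $m(h) = \langle g, h\rangle + \tfrac{1}{2}\|h\|_H^2 + \tfrac{\sigma}{2+\beta}\|h\|_H^{2+\beta}$ over $h \in \mathbb{R}^d$. Then every critical point $h^*$ of $m$ satisfies $h^* = -\alpha H^{-1} g$ where $\alpha = \left(1 + \sigma\|h^*\|_H^{\beta}\right)^{-1} \in (0,1]$, and this $\alpha$ is a root of the polynomial $P(\alpha) = 1 - \alpha - \alpha^{1+\beta}\sigma (\|g\|_H^*)^{\beta}$. -/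

import Mathlib

open Real Matrix Set

variable {d : ℕ}

noncomputable def Acl (H : Matrix (Fin d) (Fin d) ℝ) : (Fin d → ℝ) →L[ℝ] (Fin d → ℝ) :=
  (Matrix.mulVecLin H).toContinuousLinearMap

noncomputable def Dq (H : Matrix (Fin d) (Fin d) ℝ) (x : Fin d → ℝ) : (Fin d → ℝ) →L[ℝ] ℝ :=
  ∑ i, ((H.mulVec x i) • ContinuousLinearMap.proj i
      + x i • ((ContinuousLinearMap.proj i).comp (Acl H)))

lemma hasFDerivAt_Q (H : Matrix (Fin d) (Fin d) ℝ) (x : Fin d → ℝ) :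
    HasFDerivAt (fun h : Fin d → ℝ => H.mulVec h ⬝ᵥ h) (Dq H x) x := by
  have : (fun h : Fin d → ℝ => H.mulVec h ⬝ᵥ h) = fun h => ∑ i, H.mulVec h i * h i := rfl
  rw [this]
  exact HasFDerivAt.fun_sum fun i _ =>
    (((ContinuousLinearMap.proj i).comp (Acl H)).hasFDerivAt.mul
      (ContinuousLinearMap.proj (R := ℝ) (φ := fun _ : Fin d => ℝ) i).hasFDerivAt)

lemma hasFDerivAt_lin (g : Fin d → ℝ) (x : Fin d → ℝ) :
    HasFDerivAt (fun h : Fin d → ℝ => g ⬝ᵥ h)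
      (∑ i, g i • ContinuousLinearMap.proj (R := ℝ) (φ := fun _ : Fin d => ℝ) i) x := by
  have : (fun h : Fin d → ℝ => g ⬝ᵥ h) = fun h => ∑ i, g i * h i := rfl
  rw [this]
  exact HasFDerivAt.fun_sum fun i _ =>
    (ContinuousLinearMap.proj (R := ℝ) (φ := fun _ : Fin d => ℝ) i).hasFDerivAt.const_mul (g i)

lemma hasFDerivAt_m (H : Matrix (Fin d) (Fin d) ℝ) (hPSD : H.PosSemidef)
    (g : Fin d → ℝ) (σ β : ℝ) (hβ : 0 ≤ β) (x : Fin d → ℝ) :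
    HasFDerivAt (fun h : Fin d → ℝ => g ⬝ᵥ h + (1 / 2) * (H.mulVec h ⬝ᵥ h) +
      σ / (2 + β) * Real.sqrt (H.mulVec h ⬝ᵥ h) ^ (2 + β))
      ((∑ i, g i • ContinuousLinearMap.proj (R := ℝ) (φ := fun _ : Fin d => ℝ) i)
        + (1/2 : ℝ) • Dq H x
        + (σ / (2+β)) • (((2+β)/2 * (H.mulVec x ⬝ᵥ x) ^ ((2+β)/2 - 1)) • Dq H x)) x := by
  have hQnn : ∀ h : Fin d → ℝ, 0 ≤ H.mulVec h ⬝ᵥ h := by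
    intro h
    have := hPSD.dotProduct_mulVec_nonneg h
    simpa [dotProduct_comm] using this
  have hrw : ∀ h : Fin d → ℝ, Real.sqrt (H.mulVec h ⬝ᵥ h) ^ (2 + β)
      = (H.mulVec h ⬝ᵥ h) ^ ((2 + β)/2) := by
    intro h
    rw [Real.sqrt_eq_rpow, ← Real.rpow_mul (hQnn h)]
    ring_nf
  simp only [hrw]
  have h1 := hasFDerivAt_lin g x
  have h2 := (hasFDerivAt_Q H x).const_mul (1/2 : ℝ)
  have houter : HasDerivAt (fun t : ℝ => t ^ ((2+β)/2))
      ((2+β)/2 * (H.mulVec x ⬝ᵥ x) ^ ((2+β)/2 - 1)) (H.mulVec x ⬝ᵥ x) :=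
    Real.hasDerivAt_rpow_const (Or.inr (by linarith))
  have h3 : HasFDerivAt (fun h : Fin d → ℝ => σ / (2+β) * (H.mulVec h ⬝ᵥ h) ^ ((2+β)/2))
      ((σ / (2+β)) • (((2+β)/2 * (H.mulVec x ⬝ᵥ x) ^ ((2+β)/2 - 1)) • Dq H x)) x :=
    HasFDerivAt.const_mul
      (HasDerivAt.comp_hasFDerivAt (f := fun h : Fin d → ℝ => H.mulVec h ⬝ᵥ h) x houter
        (hasFDerivAt_Q H x)) (σ / (2+β))
  exact (h1.add h2).add h3

lemma Dq_apply_single (H : Matrix (Fin d) (Fin d) ℝ) (hH : H.IsSymm) (x : Fin d → ℝ) (j : Fin d) :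
    (Dq H x) (Pi.single j 1) = 2 * H.mulVec x j := by
  have hAcl : (Acl H) (Pi.single j 1) = fun i => H i j * 1 := by
    show H.mulVecLin (Pi.single j 1) = _
    rw [Matrix.mulVecLin_apply, Matrix.mulVec_single]; ext i; simp
  simp only [Dq, ContinuousLinearMap.sum_apply, ContinuousLinearMap.add_apply,
    ContinuousLinearMap.smul_apply, ContinuousLinearMap.coe_comp', Function.comp_apply,
    ContinuousLinearMap.proj_apply, hAcl, smul_eq_mul, mul_one]
  rw [Finset.sum_add_distrib]
  have h1 : ∑ i, H.mulVec x i * (Pi.single j 1 : Fin d → ℝ) i = H.mulVec x j := by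
    simp [Pi.single_apply, mul_ite, Finset.sum_ite_eq']
  have h2 : ∑ i, x i * H i j = H.mulVec x j := by
    rw [Matrix.mulVec, dotProduct]
    exact Finset.sum_congr rfl fun i _ => by rw [hH.apply, mul_comm]
  rw [h1, h2]; ring

theorem regularized_model_critical_point {d : ℕ} (H : Matrix (Fin d) (Fin d) ℝ)
    (hH : H.IsSymm) (hPD : H.PosDef) (g : Fin d → ℝ) (hg : g ≠ 0)
    (σ β : ℝ) (hσ : 0 < σ) (hβ : 0 ≤ β)
    (m : (Fin d → ℝ) → ℝ)
    (hm : m = fun h => g ⬝ᵥ h + (1 / 2) * (H.mulVec h ⬝ᵥ h) +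
      σ / (2 + β) * Real.sqrt (H.mulVec h ⬝ᵥ h) ^ (2 + β))
    (hstar : Fin d → ℝ) (hcrit : fderiv ℝ m hstar = 0) :
    ∃ α : ℝ, α = (1 + σ * Real.sqrt (H.mulVec hstar ⬝ᵥ hstar) ^ β)⁻¹ ∧
      α ∈ Ioc (0 : ℝ) 1 ∧
      hstar = -α • H⁻¹.mulVec g ∧
      1 - α - α ^ (1 + β) * σ * Real.sqrt (g ⬝ᵥ H⁻¹.mulVec g) ^ β = 0 := by
  have h2β : (0:ℝ) < 2 + β := by linarith
  have hQnn : 0 ≤ H.mulVec hstar ⬝ᵥ hstar := by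
    have := hPD.posSemidef.dotProduct_mulVec_nonneg hstar
    simpa [dotProduct_comm] using this
  set Q := H.mulVec hstar ⬝ᵥ hstar with hQdef
  set s := Real.sqrt Q with hsdef
  have hsnn : 0 ≤ s := Real.sqrt_nonneg _
  have hsb : s ^ β = Q ^ (β/2) := by
    rw [hsdef, Real.sqrt_eq_rpow, ← Real.rpow_mul hQnn]
    ring_nf
  have hsbnn : 0 ≤ s ^ β := Real.rpow_nonneg hsnn β
  set K := 1 + σ * s ^ β with hKdef
  have hK1 : 1 ≤ K := by nlinarith
  have hKpos : 0 < K := by linarith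
  -- the derivative
  have hD : HasFDerivAt m
      ((∑ i, g i • ContinuousLinearMap.proj (R := ℝ) (φ := fun _ : Fin d => ℝ) i)
        + (1/2 : ℝ) • Dq H hstar
        + (σ / (2+β)) • (((2+β)/2 * Q ^ ((2+β)/2 - 1)) • Dq H hstar)) hstar := by
    rw [hm]; exact hasFDerivAt_m H hPD.posSemidef g σ β hβ hstar
  have hDzero := hD.fderiv.symm.trans hcrit
  -- evaluate at basis vectors
  have hHx : ∀ j, H.mulVec hstar j = -(K⁻¹ * g j) := by
    intro j
    have h0 : ((∑ i, g i • ContinuousLinearMap.proj (R := ℝ) (φ := fun _ : Fin d => ℝ) i)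
        + (1/2 : ℝ) • Dq H hstar
        + (σ / (2+β)) • (((2+β)/2 * Q ^ ((2+β)/2 - 1)) • Dq H hstar)) (Pi.single j 1) = 0 := by
      rw [hDzero]; rfl
    have hlin : (∑ i, g i • ContinuousLinearMap.proj (R := ℝ) (φ := fun _ : Fin d => ℝ) i)
        (Pi.single j 1) = g j := by
      simp [ContinuousLinearMap.sum_apply, Pi.single_apply, mul_ite, Finset.sum_ite_eq']
    rw [ContinuousLinearMap.add_apply, ContinuousLinearMap.add_apply,
      ContinuousLinearMap.smul_apply, ContinuousLinearMap.smul_apply,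
      ContinuousLinearMap.smul_apply, hlin, Dq_apply_single H hH] at h0
    have hcoef : (1/2 : ℝ) * (2 * H.mulVec hstar j)
        + (σ / (2+β)) * (((2+β)/2 * Q ^ ((2+β)/2 - 1)) * (2 * H.mulVec hstar j))
        = K * H.mulVec hstar j := by
      have : Q ^ ((2+β)/2 - 1) = s ^ β := by
        rw [hsb]; congr 1; ring
      rw [this, hKdef]
      field_simp
    have h0' : g j + K * H.mulVec hstar j = 0 := by
      rw [← hcoef]
      simpa [smul_eq_mul, add_assoc] using h0
    field_simp
    linarith
  have hdet : IsUnit H.det := isUnit_iff_ne_zero.mpr hPD.det_pos.ne'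
  have hHxv : H.mulVec hstar = -K⁻¹ • g := by
    funext j
    simp [hHx j]
  have hstar_eq : hstar = -K⁻¹ • H⁻¹.mulVec g := by
    have : H⁻¹.mulVec (H.mulVec hstar) = hstar := by
      rw [Matrix.mulVec_mulVec, Matrix.nonsing_inv_mul H hdet, Matrix.one_mulVec]
    rw [← this, hHxv, Matrix.mulVec_smul]
  refine ⟨K⁻¹, rfl, ⟨inv_pos.mpr hKpos, inv_le_one_of_one_le₀ hK1⟩, hstar_eq, ?_⟩
  -- the polynomial identity
  have hG2 : Q = K⁻¹^2 * (g ⬝ᵥ H⁻¹.mulVec g) := by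
    rw [hQdef, hHxv, hstar_eq, smul_dotProduct, dotProduct_smul,
      smul_eq_mul, smul_eq_mul]
    ring
  have hαpos : 0 < K⁻¹ := inv_pos.mpr hKpos
  have hG2nn : 0 ≤ g ⬝ᵥ H⁻¹.mulVec g := by
    nlinarith [hQnn, hG2, pow_pos hαpos 2]
  have hsαG : s = K⁻¹ * Real.sqrt (g ⬝ᵥ H⁻¹.mulVec g) := by
    rw [hsdef, hG2, Real.sqrt_mul (sq_nonneg _), Real.sqrt_sq hαpos.le]
  have hrpow : (K⁻¹ : ℝ) ^ (1 + β) = K⁻¹ * K⁻¹ ^ β := by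
    rw [Real.rpow_add hαpos, Real.rpow_one]
  have hmul : s ^ β = K⁻¹ ^ β * Real.sqrt (g ⬝ᵥ H⁻¹.mulVec g) ^ β := by
    rw [hsαG, Real.mul_rpow hαpos.le (Real.sqrt_nonneg _)]
  have hKinv : K⁻¹ * K = 1 := inv_mul_cancel₀ hKpos.ne'
  rw [hrpow]
  linear_combination (-1 : ℝ) * hKinv + K⁻¹ * hKdef + (σ * K⁻¹) * hmul
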